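/- Let (U_T(M), U_T(N)) be the Radford pair arising from the degree-0 embedding and projection of the graded Hopf algebra U_T(N) = ⊕_{n≥0} U_T(N)₍ₙ₎ with U_T(N)₍₀₎ = U_T(M). Then the space of right coinvariants R(1) = U_T(N)₍₁₎^{coR} in degree 1 equals ad(U_T(M))(v_λ), the image of v_λ under the adjoint action of U_T(M). -/

import Mathlib

/-!
Write `ρ = (id ⊗ p) ∘ Δ` for the right coaction of `H` on `A` and `P x = Σ x₍₀₎ i(S x₍₁₎)`.
`P` fixes every coinvariant, and `P (i a * v * i b) = ε(b) ad(a)(v)` because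
`ρ (i a * v) = Σ i(a₁) v ⊗ a₂` and `Σ i(b₁) i(S b₂) = ε(b)`; applying `P` to the spanning set
of `N₁` gives `R(1) ⊆ ad(H)(v)`. Conversely `ad(a)(v) ∈ N₁` by stability, and it is coinvariant
by a computation in the convolution algebra `Hom(H, A ⊗ H)`, where `ρ ∘ i` is invertible with
inverse `ρ ∘ i ∘ S`.
-/

open TensorProduct Coalgebra HopfAlgebra WithConv LinearMap

section ConvInverse

variable {k H B : Type*} [CommSemiring k] [Semiring H] [HopfAlgebra k H] [Semiring B]
  [Algebra k B]

lemma AlgHom.toConv_mul_comp_antipode (φ : H →ₐ[k] B) :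
    toConv φ.toLinearMap * toConv (φ.toLinearMap ∘ₗ antipode k) = 1 := by
  calc _ = toConv (φ.toLinearMap ∘ₗ
          (toConv LinearMap.id * toConv (antipode k (A := H))).ofConv) := by
        rw [algHom_comp_convMul_distrib]; rfl
    _ = 1 := by rw [id_mul_antipode]; ext; simp

lemma AlgHom.toConv_comp_antipode_mul (φ : H →ₐ[k] B) :
    toConv (φ.toLinearMap ∘ₗ antipode k) * toConv φ.toLinearMap = 1 := by
  calc _ = toConv (φ.toLinearMap ∘ₗ
          (toConv (antipode k (A := H)) * toConv LinearMap.id).ofConv) := by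
        rw [algHom_comp_convMul_distrib]; rfl
    _ = 1 := by rw [antipode_mul_id]; ext; simp

end ConvInverse

lemma BialgHom.sum_mul_map_antipode_eq_algebraMap_counit {k H B : Type*} [CommSemiring k]
    [Semiring H] [HopfAlgebra k H] [Semiring B] [Bialgebra k B] (φ : H →ₐc[k] B) (b : H) :
    ∑ j ∈ (ℛ k b).index, φ ((ℛ k b).left j) * φ (antipode k ((ℛ k b).right j)) =
      algebraMap k B (counit (R := k) b) := by
  have := congrArg (fun f : WithConv (H →ₗ[k] B) => f b)
    (AlgHom.toConv_mul_comp_antipode (φ : H →ₐ[k] B))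
  simpa [(ℛ k b).convMul_apply] using this

lemma toConv_includeLeft_comp_mul_toConv_includeRight {k H A : Type*} [CommSemiring k]
    [Semiring H] [Semiring A] [Algebra k H] [Algebra k A] [Coalgebra k H] (f : H →ₗ[k] A) :
    toConv ((Algebra.TensorProduct.includeLeft : A →ₐ[k] A ⊗[k] H).toLinearMap ∘ₗ f) *
      toConv (Algebra.TensorProduct.includeRight : H →ₐ[k] A ⊗[k] H).toLinearMap =
    toConv (map f LinearMap.id ∘ₗ comul) := by
  ext a
  simp [(ℛ k a).convMul_apply, ← (ℛ k a).eq]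

namespace RadfordPair

variable {k H A : Type*} [CommSemiring k] [Semiring H] [HopfAlgebra k H] [Ring A] [Bialgebra k A]
  (i : H →ₐc[k] A) (p : A →ₐc[k] H)

noncomputable def rightCoaction : A →ₐ[k] A ⊗[k] H :=
  (Algebra.TensorProduct.map (AlgHom.id k A) p).comp (Bialgebra.comulAlgHom k A)

noncomputable def rightCoinvariants : Submodule k A :=
  ker ((rightCoaction p).toLinearMap - (TensorProduct.mk k A H).flip 1)

noncomputable def adjointAction (w : A) : H →ₗ[k] A :=
  lift ((LinearMap.mul k A).comp (mulRight k w)) ∘ₗ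
    map i.toLinearMap (i.toLinearMap ∘ₗ antipode k) ∘ₗ comul

noncomputable def coinvariantProjection : A →ₗ[k] A :=
  mul' k A ∘ₗ map LinearMap.id (i.toLinearMap ∘ₗ antipode k) ∘ₗ (rightCoaction p).toLinearMap

variable {i p}

lemma mem_rightCoinvariants {x : A} :
    x ∈ rightCoinvariants p ↔ rightCoaction p x = x ⊗ₜ 1 := by
  rw [rightCoinvariants, mem_ker, LinearMap.sub_apply, sub_eq_zero]
  rfl

lemma adjointAction_eq_convMul (w : A) :
    adjointAction i w =
      (toConv (mulRight k w ∘ₗ i.toLinearMap) * toConv (i.toLinearMap ∘ₗ antipode k)).ofConv := by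
  ext a
  simp [adjointAction, (ℛ k a).convMul_apply, ← (ℛ k a).eq]

lemma adjointAction_convMul_coalgHom (w : A) :
    (toConv (adjointAction i w) * toConv i.toLinearMap).ofConv =
      mulRight k w ∘ₗ i.toLinearMap := by
  have hinv : toConv (i.toLinearMap ∘ₗ antipode k) * toConv i.toLinearMap = 1 :=
    AlgHom.toConv_comp_antipode_mul (i : H →ₐ[k] A)
  rw [adjointAction_eq_convMul, toConv_ofConv, mul_assoc, hinv, mul_one, ofConv_toConv]

lemma rightCoaction_coalgHom (hpi : ∀ h : H, p (i h) = h) (h : H) :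
    rightCoaction p (i h) = map i.toLinearMap LinearMap.id (comul h) := by
  have hpi' : p.toLinearMap ∘ₗ (i : H →ₗ[k] A) = LinearMap.id := LinearMap.ext hpi
  change map LinearMap.id p.toLinearMap (comul (i h)) = _
  rw [← CoalgHomClass.map_comp_comul_apply i h, ← LinearMap.comp_apply (map _ _), ← map_comp,
    hpi']
  rfl

lemma rightCoaction_coalgHom_mul {w : A} (hpi : ∀ h : H, p (i h) = h)
    (hw : w ∈ rightCoinvariants p) (h : H) :
    rightCoaction p (i h * w) = map (mulRight k w ∘ₗ i.toLinearMap) LinearMap.id (comul h) := by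
  rw [map_mul, rightCoaction_coalgHom hpi, mem_rightCoinvariants.mp hw]
  induction (comul h : H ⊗[k] H) with
  | zero => simp
  | tmul x y => simp
  | add x y hx hy => rw [map_add, map_add, add_mul, hx, hy]

/-- Both `ρ ∘ ad_w` and `ι₁ ∘ ad_w` multiply the convolution-invertible `ρ ∘ i = ι₁ ∘ i * ι₂`
to `ι₁ ∘ (· * w) ∘ i * ι₂`. -/
lemma rightCoaction_adjointAction {w : A} (hpi : ∀ h : H, p (i h) = h)
    (hw : w ∈ rightCoinvariants p) (a : H) :
    rightCoaction p (adjointAction i w a) = adjointAction i w a ⊗ₜ 1 := by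
  let ι₁ : A →ₐ[k] A ⊗[k] H := Algebra.TensorProduct.includeLeft
  let ι₂ : H →ₐ[k] A ⊗[k] H := Algebra.TensorProduct.includeRight
  have hρi : toConv ((rightCoaction p).toLinearMap ∘ₗ i.toLinearMap) =
      toConv (ι₁.toLinearMap ∘ₗ i.toLinearMap) * toConv ι₂.toLinearMap := by
    rw [toConv_includeLeft_comp_mul_toConv_includeRight]
    exact congrArg toConv (LinearMap.ext (rightCoaction_coalgHom hpi))
  have hρi_inv : toConv ((rightCoaction p).toLinearMap ∘ₗ i.toLinearMap) *
      toConv ((rightCoaction p).toLinearMap ∘ₗ i.toLinearMap ∘ₗ antipode k) = 1 :=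
    AlgHom.toConv_mul_comp_antipode ((rightCoaction p).comp (i : H →ₐ[k] A))
  suffices toConv ((rightCoaction p).toLinearMap ∘ₗ adjointAction i w) =
      toConv (ι₁.toLinearMap ∘ₗ adjointAction i w) from
    LinearMap.congr_fun (congrArg ofConv this) a
  calc toConv ((rightCoaction p).toLinearMap ∘ₗ adjointAction i w)
      = toConv ((rightCoaction p).toLinearMap ∘ₗ mulRight k w ∘ₗ i.toLinearMap) *
          toConv ((rightCoaction p).toLinearMap ∘ₗ i.toLinearMap ∘ₗ antipode k) := by
        rw [adjointAction_eq_convMul, algHom_comp_convMul_distrib, toConv_ofConv]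
    _ = toConv (ι₁.toLinearMap ∘ₗ mulRight k w ∘ₗ i.toLinearMap) * toConv ι₂.toLinearMap *
          toConv ((rightCoaction p).toLinearMap ∘ₗ i.toLinearMap ∘ₗ antipode k) := by
        rw [toConv_includeLeft_comp_mul_toConv_includeRight]
        exact congrArg (· * _) (congrArg toConv (LinearMap.ext (rightCoaction_coalgHom_mul hpi hw)))
    _ = toConv (ι₁.toLinearMap ∘ₗ adjointAction i w) *
          toConv ((rightCoaction p).toLinearMap ∘ₗ i.toLinearMap) *
          toConv ((rightCoaction p).toLinearMap ∘ₗ i.toLinearMap ∘ₗ antipode k) := by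
        rw [← adjointAction_convMul_coalgHom, algHom_comp_convMul_distrib, hρi]
        simp only [toConv_ofConv, mul_assoc]
    _ = toConv (ι₁.toLinearMap ∘ₗ adjointAction i w) := by rw [mul_assoc, hρi_inv, mul_one]

lemma adjointAction_mem {N : Submodule k A} (hN : ∀ a b : H, ∀ x ∈ N, i a * x * i b ∈ N)
    {w : A} (hw : w ∈ N) (a : H) : adjointAction i w a ∈ N := by
  rw [adjointAction, LinearMap.comp_apply, LinearMap.comp_apply, ← (ℛ k a).eq, map_sum, map_sum]
  exact Submodule.sum_mem _ fun j _ => hN _ _ w hw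

lemma coinvariantProjection_of_mem {x : A} (hx : x ∈ rightCoinvariants p) :
    coinvariantProjection i p x = x := by
  simp only [coinvariantProjection, LinearMap.comp_apply, AlgHom.toLinearMap_apply,
    mem_rightCoinvariants.mp hx, map_tmul, mul'_apply, antipode_one]
  change x * i 1 = x
  rw [map_one, mul_one]

lemma coinvariantProjection_mul_coalgHom (hpi : ∀ h : H, p (i h) = h) (y : A) (b : H) :
    coinvariantProjection i p (y * i b) = counit (R := k) b • coinvariantProjection i p y := by
  have hi_apply : ∀ h, i.toLinearMap h = i h := fun _ => rfl
  simp only [coinvariantProjection, LinearMap.comp_apply, AlgHom.toLinearMap_apply, map_mul,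
    rightCoaction_coalgHom hpi]
  induction rightCoaction p y with
  | zero => simp
  | add s t hs ht => simp only [add_mul, map_add, hs, ht, smul_add]
  | tmul x h =>
    rw [← (ℛ k b).eq]
    simp only [map_sum, Finset.mul_sum, map_tmul, Algebra.TensorProduct.tmul_mul_tmul,
      mul'_apply, LinearMap.id_coe, id_eq, LinearMap.comp_apply, antipode_mul_antidistrib,
      hi_apply, map_mul]
    simp_rw [← mul_assoc, ← Finset.sum_mul, mul_assoc x, ← Finset.mul_sum,
      BialgHom.sum_mul_map_antipode_eq_algebraMap_counit, ← Algebra.commutes, Algebra.smul_def,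
      mul_assoc]

lemma coinvariantProjection_coalgHom_mul {w : A} (hpi : ∀ h : H, p (i h) = h)
    (hw : w ∈ rightCoinvariants p) (a : H) :
    coinvariantProjection i p (i a * w) = adjointAction i w a := by
  rw [coinvariantProjection, LinearMap.comp_apply, LinearMap.comp_apply,
    AlgHom.toLinearMap_apply, rightCoaction_coalgHom_mul hpi hw, adjointAction,
    LinearMap.comp_apply, LinearMap.comp_apply]
  induction (comul a : H ⊗[k] H) with
  | zero => simp
  | tmul x y => simp [mul_assoc]
  | add s t hs ht => simp only [map_add, hs, ht]

lemma span_inf_rightCoinvariants_le_range_adjointAction {w : A} (hpi : ∀ h : H, p (i h) = h)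
    (hw : w ∈ rightCoinvariants p) :
    Submodule.span k {x : A | ∃ a b : H, x = i a * w * i b} ⊓ rightCoinvariants p ≤
      range (adjointAction i w) := by
  rintro x ⟨hx_span, hx⟩
  rw [← coinvariantProjection_of_mem hx]
  have hPx := Submodule.mem_map_of_mem (f := coinvariantProjection i p) hx_span
  rw [Submodule.map_span] at hPx
  refine Submodule.span_le.mpr ?_ hPx
  rintro _ ⟨_, ⟨a, b, rfl⟩, rfl⟩
  rw [coinvariantProjection_mul_coalgHom hpi, coinvariantProjection_coalgHom_mul hpi hw]
  exact ⟨counit (R := k) b • a, map_smul _ _ _⟩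

lemma range_adjointAction_le_inf_rightCoinvariants {N : Submodule k A} {w : A}
    (hpi : ∀ h : H, p (i h) = h) (hN : ∀ a b : H, ∀ x ∈ N, i a * x * i b ∈ N) (hwN : w ∈ N)
    (hw : w ∈ rightCoinvariants p) :
    range (adjointAction i w) ≤ N ⊓ rightCoinvariants p := by
  rintro _ ⟨a, rfl⟩
  exact ⟨adjointAction_mem hN hwN a,
    mem_rightCoinvariants.mpr (rightCoaction_adjointAction hpi hw a)⟩

end RadfordPair

open RadfordPair in
/-- **Degree-one coinvariants of a graded Radford pair are the adjoint orbit
of `v_λ`.**  Let `(H, A)` be a Radford pair (`i : H → A`, `p : A → H` Hopf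
morphisms with `p ∘ i = id`), coming from a graded Hopf algebra `A` with
degree-0 part `H`.  Let `N₁ ⊆ A` be the degree-1 component, stable under
left and right multiplication by degree-0 elements, let `v = v_λ ∈ N₁` be a
right coinvariant, and suppose every element of `N₁` is a linear combination
of elements `i(a) * v * i(b)` with `a, b ∈ H`.  Then the space
`R(1) = N₁^{coR}` of right coinvariants in `N₁` equals `ad(H)(v)`, the image
of `v` under the adjoint action `ad(a)(v) = Σ i(a₍₁₎) v i(S(a₍₂₎))`. -/
theorem radford_degree_one_coinvariants_eq_adjoint_orbit
    (k H A : Type) [Field k]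
    [Ring H] [HopfAlgebra k H] [Ring A] [HopfAlgebra k A]
    (i : H →ₐc[k] A) (p : A →ₐc[k] H) (hpi : ∀ h : H, p (i h) = h)
    (N₁ : Submodule k A) (v : A)
    (hv : v ∈ N₁)
    -- `v` is a right coinvariant
    (hvco : (TensorProduct.map LinearMap.id p.toLinearMap)
        (Coalgebra.comul v) = v ⊗ₜ[k] (1 : H))
    -- `N₁` is spanned by the elements `i(a) * v * i(b)`
    (hspan : N₁ ≤ Submodule.span k {x : A | ∃ a b : H, x = i a * v * i b})
    -- `N₁` is stable under multiplication by degree-0 elements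
    (hstab : ∀ (a b : H), ∀ x ∈ N₁, i a * x * i b ∈ N₁) :
    N₁ ⊓ LinearMap.ker
        ((TensorProduct.map LinearMap.id p.toLinearMap ∘ₗ Coalgebra.comul)
          - (TensorProduct.mk k A H).flip 1)
      = LinearMap.range
          (TensorProduct.lift
              ((LinearMap.mul k A).comp (LinearMap.mulRight k v))
            ∘ₗ TensorProduct.map i.toLinearMap
                (i.toLinearMap ∘ₗ HopfAlgebra.antipode (R := k))
            ∘ₗ Coalgebra.comul) := by
  have hv_coinv : v ∈ rightCoinvariants p := mem_rightCoinvariants.mpr hvco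
  change N₁ ⊓ rightCoinvariants p = range (adjointAction i v)
  exact le_antisymm
    ((inf_le_inf_right _ hspan).trans
      (span_inf_rightCoinvariants_le_range_adjointAction hpi hv_coinv))
    (range_adjointAction_le_inf_rightCoinvariants hpi hstab hv hv_coinv)
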